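/- Equivariant partition formula: let (S, ⊕, σ, ε) be a locally finite SFD partial semigroup, R a commutative ℚ-algebra, and c : S → R a multiplicative equivariant statistics with c(ε) = 1. Then for every n ≥ 1, c(S_{[1..n]}) = ∑_{π ∈ Πₙ} ∏_{p ∈ π} c(atoms(S)_{[1..card p]}), where Πₙ is the (finite) set of all set partitions of [1..n] = {1, …, n} into nonempty blocks. -/

import Mathlib

/-- A square-free decomposable (SFD) partial semigroup. -/
structure SFD (S : Type*) where
  eps : S
  op : S → S → S
  supp : S → Finset ℕ+
  supp_eq_empty : ∀ ω : S, supp ω = ∅ ↔ ω = eps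
  eps_op : ∀ ω : S, op eps ω = ω
  op_eps : ∀ ω : S, op ω eps = ω
  supp_op : ∀ ω₁ ω₂ : S, supp ω₁ ∩ supp ω₂ = ∅ →
      supp (op ω₁ ω₂) = supp ω₁ ∪ supp ω₂
  op_comm : ∀ ω₁ ω₂ : S, supp ω₁ ∩ supp ω₂ = ∅ → op ω₁ ω₂ = op ω₂ ω₁
  op_assoc : ∀ ω₁ ω₂ ω₃ : S, supp ω₁ ∩ supp ω₂ = ∅ →
      supp ω₁ ∩ supp ω₃ = ∅ → supp ω₂ ∩ supp ω₃ = ∅ →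
      op (op ω₁ ω₂) ω₃ = op ω₁ (op ω₂ ω₃)
  levi : ∀ a b c d : S, supp a ∩ supp b = ∅ → supp c ∩ supp d = ∅ →
      op a b = op c d →
      ∃ w11 w12 w21 w22 : S,
        supp w11 ∩ supp w12 = ∅ ∧ supp w21 ∩ supp w22 = ∅ ∧
        supp w11 ∩ supp w21 = ∅ ∧ supp w12 ∩ supp w22 = ∅ ∧
        a = op w11 w12 ∧ b = op w21 w22 ∧ c = op w11 w21 ∧ d = op w12 w22

/-- Iterated sum of a list of elements. -/
def SFD.opList {S : Type*} (P : SFD S) : List S → S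
  | [] => P.eps
  | a :: l => P.op a (P.opList l)

/-- Iterated sum of a finite family indexed by `Fin n`. -/
def SFD.opFam {S : Type*} (P : SFD S) {n : ℕ} (ω : Fin n → S) : S :=
  P.opList (List.ofFn ω)

/-- An atom: a nonunit element which cannot be split. -/
def SFD.IsAtom {S : Type*} (P : SFD S) (ω : S) : Prop :=
  ω ≠ P.eps ∧ ∀ ω₁ ω₂ : S, P.supp ω₁ ∩ P.supp ω₂ = ∅ → ω = P.op ω₁ ω₂ →
    ω₁ = P.eps ∨ ω₂ = P.eps

/-- The interval `[1..n]` as a finite set of positive integers. -/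
def pInterval (n : ℕ) : Finset ℕ+ :=
  (Finset.range n).image (fun i => ⟨i + 1, Nat.succ_pos i⟩)

open scoped Classical in
/-- The (finite) set of set partitions of `[1..n]` into nonempty blocks. -/
noncomputable def partitionsOf (n : ℕ) : Finset (Finset (Finset ℕ+)) :=
  ((pInterval n).powerset.powerset).filter
    (fun π => ∅ ∉ π ∧ (∀ p ∈ π, ∀ q ∈ π, p ≠ q → p ∩ q = ∅) ∧
      π.sup id = pInterval n)

/-!
Fix `x ∈ F`. Every `ω` with support `F` factors uniquely as `a ⊕ ω'` with `a` an atom whose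
support contains `x`: existence by induction on the support, uniqueness by Levi's property. Hence
`c(S_F) = ∑_{x ∈ p ⊆ F} c(atoms(S)_p) c(S_{F \ p})`. A set partition of `F` is likewise its block
containing `x` together with a partition of the rest, so the partition sum obeys the same recursion
and the two agree by strong induction on `F`. Equivariance finally replaces `c(atoms(S)_p)` by
`c(atoms(S)_{[1..card p]})`.
-/

open Finset

section SetPartitions

variable {α : Type*} [DecidableEq α]

def setPartitions (F : Finset α) : Finset (Finset (Finset α)) :=
  F.powerset.powerset.filter
    (fun π => ∅ ∉ π ∧ (∀ p ∈ π, ∀ q ∈ π, p ≠ q → p ∩ q = ∅) ∧ π.sup id = F)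

lemma mem_setPartitions {F : Finset α} {π : Finset (Finset α)} :
    π ∈ setPartitions F ↔
      ∅ ∉ π ∧ (∀ p ∈ π, ∀ q ∈ π, p ≠ q → p ∩ q = ∅) ∧ π.sup id = F := by
  refine ⟨fun h => (mem_filter.mp h).2, fun h => mem_filter.mpr ⟨?_, h⟩⟩
  rw [mem_powerset]
  intro p hp
  rw [mem_powerset, ← h.2.2]
  exact le_sup (f := id) hp

lemma setPartitions_empty : setPartitions (∅ : Finset α) = {∅} := by
  ext π
  rw [mem_setPartitions, mem_singleton]
  refine ⟨fun ⟨hne, _, hsup⟩ => eq_empty_of_forall_notMem fun p hp => ?_, ?_⟩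
  · have hp_empty : p = ∅ := (Finset.sup_eq_bot_iff id π).mp hsup p hp
    exact hne (hp_empty ▸ hp)
  · rintro rfl
    simp

lemma subset_of_mem_setPartitions {F p : Finset α} {π : Finset (Finset α)}
    (hπ : π ∈ setPartitions F) (hp : p ∈ π) : p ⊆ F :=
  (mem_setPartitions.mp hπ).2.2 ▸ le_sup (f := id) hp

lemma notMem_setPartitions_sdiff {F p : Finset α} {π : Finset (Finset α)}
    (hπ : π ∈ setPartitions (F \ p)) (hp : p.Nonempty) : p ∉ π := by
  intro hpπ
  obtain ⟨x, hx⟩ := hp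
  exact (mem_sdiff.mp (subset_of_mem_setPartitions hπ hpπ hx)).2 hx

lemma insert_mem_setPartitions {F p : Finset α} {π : Finset (Finset α)} (hpF : p ⊆ F)
    (hp : p.Nonempty) (hπ : π ∈ setPartitions (F \ p)) : insert p π ∈ setPartitions F := by
  obtain ⟨hne, hdisj, hsup⟩ := mem_setPartitions.mp hπ
  have hdisj_p : ∀ q ∈ π, p ∩ q = ∅ := fun q hq =>
    disjoint_iff_inter_eq_empty.mp (disjoint_of_subset_right
      (subset_of_mem_setPartitions hπ hq) disjoint_sdiff)
  refine mem_setPartitions.mpr ⟨?_, ?_, ?_⟩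
  · rw [mem_insert, not_or]
    exact ⟨hp.ne_empty.symm, hne⟩
  · intro q hq r hr hqr
    rcases mem_insert.mp hq with hqp | hq <;> rcases mem_insert.mp hr with hrp | hr
    · exact absurd (hqp.trans hrp.symm) hqr
    · rw [hqp]; exact hdisj_p r hr
    · rw [hrp, inter_comm]; exact hdisj_p q hq
    · exact hdisj q hq r hr hqr
  · rw [sup_insert, hsup, id, sup_eq_union, union_sdiff_of_subset hpF]

lemma erase_mem_setPartitions_sdiff {F p : Finset α} {π : Finset (Finset α)}
    (hπ : π ∈ setPartitions F) (hp : p ∈ π) : π.erase p ∈ setPartitions (F \ p) := by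
  obtain ⟨hne, hdisj, hsup⟩ := mem_setPartitions.mp hπ
  refine mem_setPartitions.mpr ⟨fun h => hne (mem_of_mem_erase h),
    fun q hq r hr => hdisj q (mem_of_mem_erase hq) r (mem_of_mem_erase hr), ?_⟩
  have hsplit : π.sup id = p ∪ (π.erase p).sup id := by
    conv_lhs => rw [← insert_erase hp, sup_insert]
    rfl
  have hdisj_p : Disjoint p ((π.erase p).sup id) := Finset.disjoint_sup_right.mpr fun q hq =>
    disjoint_iff_inter_eq_empty.mpr (hdisj p hp q (mem_of_mem_erase hq) (ne_of_mem_erase hq).symm)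
  rw [← hsup, hsplit, union_sdiff_cancel_left hdisj_p]

-- A partition corresponds to its block containing `x` and a partition of the remaining points.
lemma sum_setPartitions_prod_eq_sum_mul_sum {R : Type*} [CommSemiring R] (A : Finset α → R)
    {F : Finset α} {x : α} (hx : x ∈ F) :
    ∑ π ∈ setPartitions F, ∏ p ∈ π, A p = ∑ p ∈ F.powerset with x ∈ p,
      A p * ∑ π ∈ setPartitions (F \ p), ∏ q ∈ π, A q := by
  have hmem : ∀ y ∈ (F.powerset.filter (x ∈ ·)).sigma (fun p => setPartitions (F \ p)),
      y.1 ⊆ F ∧ x ∈ y.1 ∧ y.2 ∈ setPartitions (F \ y.1) := by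
    intro y hy
    simp only [mem_sigma, mem_filter, mem_powerset] at hy
    exact ⟨hy.1.1, hy.1.2, hy.2⟩
  have hnotMem : ∀ y ∈ (F.powerset.filter (x ∈ ·)).sigma (fun p => setPartitions (F \ p)),
      y.1 ∉ y.2 := fun y hy =>
    notMem_setPartitions_sdiff (hmem y hy).2.2 ⟨x, (hmem y hy).2.1⟩
  simp_rw [mul_sum]
  rw [sum_sigma']
  symm
  refine sum_bij (fun y _ => insert y.1 y.2) ?_ ?_ ?_ ?_
  · intro y hy
    obtain ⟨hpF, hxp, hπ⟩ := hmem y hy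
    exact insert_mem_setPartitions hpF ⟨x, hxp⟩ hπ
  · rintro ⟨p, π⟩ hy ⟨q, ρ⟩ hz h
    obtain ⟨-, hxp, hπ⟩ := hmem _ hy
    obtain ⟨-, hxq, hρ⟩ := hmem _ hz
    have hpπ : p ∉ π := hnotMem _ hy
    have hqρ : q ∉ ρ := hnotMem _ hz
    dsimp only at h hxp hxq hπ hρ hpπ hqρ
    obtain rfl : p = q := by
      rcases mem_insert.mp (h ▸ mem_insert_self p π) with hpq | hpρ
      · exact hpq
      · exact absurd hxq (mem_sdiff.mp (subset_of_mem_setPartitions hρ hpρ hxp)).2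
    rw [← erase_insert hpπ, h, erase_insert hqρ]
  · intro π hπ
    obtain ⟨p, hp, hxp⟩ := mem_sup.mp ((mem_setPartitions.mp hπ).2.2 ▸ hx)
    refine ⟨⟨p, π.erase p⟩, ?_, insert_erase hp⟩
    simp only [mem_sigma, mem_filter, mem_powerset]
    exact ⟨⟨subset_of_mem_setPartitions hπ hp, hxp⟩, erase_mem_setPartitions_sdiff hπ hp⟩
  · intro y hy
    rw [prod_insert (hnotMem y hy)]

end SetPartitions

namespace SFD

variable {S : Type*} (P : SFD S)

lemma supp_eps : P.supp P.eps = ∅ := (P.supp_eq_empty _).mpr rfl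

variable {P}

lemma supp_nonempty_of_ne_eps {ω : S} (h : ω ≠ P.eps) : (P.supp ω).Nonempty :=
  nonempty_iff_ne_empty.mpr fun he => h ((P.supp_eq_empty ω).mp he)

lemma supp_op_of_disjoint {a b : S} (h : Disjoint (P.supp a) (P.supp b)) :
    P.supp (P.op a b) = P.supp a ∪ P.supp b :=
  P.supp_op a b (disjoint_iff_inter_eq_empty.mp h)

lemma op_comm_of_disjoint {a b : S} (h : Disjoint (P.supp a) (P.supp b)) :
    P.op a b = P.op b a :=
  P.op_comm a b (disjoint_iff_inter_eq_empty.mp h)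

lemma exists_isAtom_op_of_mem_supp {x : ℕ+} {ω : S} (hx : x ∈ P.supp ω) :
    ∃ a ω', P.IsAtom a ∧ x ∈ P.supp a ∧ Disjoint (P.supp a) (P.supp ω') ∧ P.op a ω' = ω := by
  induction hN : (P.supp ω).card using Nat.strong_induction_on generalizing ω with
  | _ N ih =>
  have hne : ω ≠ P.eps := by rintro rfl; simp [supp_eps] at hx
  by_cases hatom : P.IsAtom ω
  · exact ⟨ω, P.eps, hatom, hx, by simp [supp_eps], P.op_eps ω⟩
  simp only [SFD.IsAtom, hne, ne_eq, not_false_eq_true, true_and, not_forall, not_or] at hatom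
  obtain ⟨ω₁, ω₂, hd, rfl, hne₁, hne₂⟩ := hatom
  rw [← disjoint_iff_inter_eq_empty] at hd
  obtain ⟨ω₁, ω₂, hd, hop, hx₁, hne₂⟩ : ∃ ω₁' ω₂', Disjoint (P.supp ω₁') (P.supp ω₂') ∧
      P.op ω₁' ω₂' = P.op ω₁ ω₂ ∧ x ∈ P.supp ω₁' ∧ ω₂' ≠ P.eps := by
    rcases mem_union.mp (supp_op_of_disjoint hd ▸ hx) with hx₁ | hx₂
    · exact ⟨ω₁, ω₂, hd, rfl, hx₁, hne₂⟩
    · exact ⟨ω₂, ω₁, hd.symm, (op_comm_of_disjoint hd).symm, hx₂, hne₁⟩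
  rw [← hop] at hN ⊢
  have hlt : (P.supp ω₁).card < N := by
    rw [← hN, supp_op_of_disjoint hd, card_union_of_disjoint hd]
    have := (supp_nonempty_of_ne_eps hne₂).card_pos
    omega
  obtain ⟨a, ω', ha, hxa, had, rfl⟩ := ih _ hlt hx₁ rfl
  rw [supp_op_of_disjoint had, disjoint_union_left] at hd
  refine ⟨a, P.op ω' ω₂, ha, hxa, ?_, ?_⟩
  · rw [supp_op_of_disjoint hd.2]
    exact disjoint_union_right.mpr ⟨had, hd.1⟩
  · exact (P.op_assoc _ _ _ (disjoint_iff_inter_eq_empty.mp had)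
      (disjoint_iff_inter_eq_empty.mp hd.1) (disjoint_iff_inter_eq_empty.mp hd.2)).symm

lemma eq_of_isAtom_op_eq {x : ℕ+} {a b ω ω' : S} (ha : P.IsAtom a) (hb : P.IsAtom b)
    (hxa : x ∈ P.supp a) (hxb : x ∈ P.supp b) (had : Disjoint (P.supp a) (P.supp ω))
    (hbd : Disjoint (P.supp b) (P.supp ω')) (h : P.op a ω = P.op b ω') :
    a = b ∧ ω = ω' := by
  obtain ⟨w₁₁, w₁₂, w₂₁, w₂₂, h₁, h₂, h₁₁₂₁, -, rfl, rfl, rfl, rfl⟩ :=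
    P.levi _ _ _ _ (disjoint_iff_inter_eq_empty.mp had) (disjoint_iff_inter_eq_empty.mp hbd) h
  rcases ha.2 w₁₁ w₁₂ h₁ rfl with rfl | rfl
  · -- then `b = w₂₁` lies inside `ω`, which is disjoint from `a ∋ x`
    rw [P.eps_op] at hxb
    rw [P.supp_op _ _ h₂] at had
    exact absurd (mem_union_left _ hxb) (disjoint_left.mp had hxa)
  rcases hb.2 w₁₁ w₂₁ h₁₁₂₁ rfl with rfl | rfl
  · exact absurd (P.op_eps _) ha.1
  · simp only [P.op_eps, P.eps_op, and_self]

def LocallyFinite (P : SFD S) : Prop := ∀ F : Finset ℕ+, {ω : S | P.supp ω = F}.Finite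

def IsMultiplicative {R : Type*} [Mul R] (P : SFD S) (c : S → R) : Prop :=
  ∀ ω₁ ω₂ : S, P.supp ω₁ ∩ P.supp ω₂ = ∅ → c (P.op ω₁ ω₂) = c ω₁ * c ω₂

noncomputable def LocallyFinite.slice (hP : P.LocallyFinite) (F : Finset ℕ+) : Finset S :=
  (hP F).toFinset

@[simp]
lemma LocallyFinite.mem_slice (hP : P.LocallyFinite) {F : Finset ℕ+} {ω : S} :
    ω ∈ hP.slice F ↔ P.supp ω = F :=
  Set.Finite.mem_toFinset _

lemma LocallyFinite.slice_empty (hP : P.LocallyFinite) : hP.slice ∅ = {P.eps} := by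
  ext ω
  simp [P.supp_eq_empty]

-- `(p, a, ω') ↦ a ⊕ ω'` is a bijection onto `S_F`, with `a` the atom of the image containing `x`.
lemma LocallyFinite.sum_slice_eq_sum_mul_sum {R : Type*} [CommSemiring R]
    (hP : P.LocallyFinite) [DecidablePred P.IsAtom] {c : S → R} (hc : P.IsMultiplicative c)
    {F : Finset ℕ+} {x : ℕ+} (hx : x ∈ F) :
    ∑ ω ∈ hP.slice F, c ω = ∑ p ∈ F.powerset with x ∈ p,
      (∑ a ∈ hP.slice p with P.IsAtom a, c a) * ∑ ω ∈ hP.slice (F \ p), c ω := by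
  simp_rw [sum_mul_sum, ← sum_product', sum_sigma']
  symm
  refine sum_bij (fun y _ => P.op y.2.1 y.2.2) ?_ ?_ ?_ ?_
  · rintro ⟨p, a, ω⟩ hy
    simp only [mem_sigma, mem_filter, mem_powerset, mem_product, mem_slice] at hy ⊢
    obtain ⟨⟨hpF, -⟩, ⟨rfl, -⟩, hω⟩ := hy
    rw [supp_op_of_disjoint (hω ▸ disjoint_sdiff), hω, union_sdiff_of_subset hpF]
  · rintro ⟨p, a, ω⟩ hy ⟨q, b, ω'⟩ hz h
    simp only [mem_sigma, mem_filter, mem_powerset, mem_product, mem_slice] at hy hz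
    obtain ⟨⟨-, hxa⟩, ⟨rfl, ha⟩, hω⟩ := hy
    obtain ⟨⟨-, hxb⟩, ⟨rfl, hb⟩, hω'⟩ := hz
    obtain ⟨rfl, rfl⟩ := eq_of_isAtom_op_eq ha hb hxa hxb (hω ▸ disjoint_sdiff)
      (hω' ▸ disjoint_sdiff) h
    rfl
  · intro ω hω
    rw [mem_slice] at hω
    obtain ⟨a, ω', ha, hxa, had, rfl⟩ := exists_isAtom_op_of_mem_supp (hω ▸ hx)
    rw [supp_op_of_disjoint had] at hω
    refine ⟨⟨P.supp a, a, ω'⟩, ?_, rfl⟩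
    simp only [mem_sigma, mem_filter, mem_powerset, mem_product, mem_slice, true_and]
    exact ⟨⟨hω ▸ subset_union_left, hxa⟩, ha, by rw [← hω, union_sdiff_cancel_left had]⟩
  · rintro ⟨p, a, ω⟩ hy
    simp only [mem_sigma, mem_filter, mem_powerset, mem_product, mem_slice] at hy
    obtain ⟨-, ⟨rfl, -⟩, hω⟩ := hy
    exact (hc a ω (disjoint_iff_inter_eq_empty.mp (hω ▸ disjoint_sdiff))).symm

lemma LocallyFinite.finsum_atoms_eq_sum {R : Type*} [AddCommMonoid R] (hP : P.LocallyFinite)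
    [DecidablePred P.IsAtom] (c : S → R) (F : Finset ℕ+) :
    ∑ᶠ ω ∈ {w : S | P.IsAtom w ∧ P.supp w = F}, c ω = ∑ a ∈ hP.slice F with P.IsAtom a, c a := by
  rw [finsum_mem_eq_finite_toFinset_sum _ ((hP F).subset fun w hw => hw.2)]
  congr 1
  ext ω
  simp [and_comm]

theorem LocallyFinite.sum_slice_eq_sum_setPartitions {R : Type*} [CommSemiring R]
    (hP : P.LocallyFinite) [DecidablePred P.IsAtom] {c : S → R} (hc : P.IsMultiplicative c)
    (heps : c P.eps = 1) (F : Finset ℕ+) :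
    ∑ ω ∈ hP.slice F, c ω =
      ∑ π ∈ setPartitions F, ∏ p ∈ π, ∑ a ∈ hP.slice p with P.IsAtom a, c a := by
  induction F using Finset.strongInduction with
  | H F ih =>
  rcases F.eq_empty_or_nonempty with rfl | ⟨x, hx⟩
  · simp [hP.slice_empty, setPartitions_empty, heps]
  rw [hP.sum_slice_eq_sum_mul_sum hc hx, sum_setPartitions_prod_eq_sum_mul_sum _ hx]
  refine sum_congr rfl fun p hp => ?_
  obtain ⟨hpF, hxp⟩ := mem_filter.mp hp
  rw [ih _ (sdiff_ssubset (mem_powerset.mp hpF) ⟨x, hxp⟩)]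

end SFD

lemma card_pInterval (n : ℕ) : (pInterval n).card = n := by
  unfold pInterval
  exact (card_image_of_injective _ fun i j h => Nat.succ_injective (congrArg Subtype.val h)).trans
    (card_range n)

lemma partitionsOf_eq_setPartitions (n : ℕ) : partitionsOf n = setPartitions (pInterval n) := by
  ext π
  simp only [partitionsOf, setPartitions, mem_filter]

theorem slice_sum_equivariant_partition_formula_general {S : Type*} {R : Type*}
    [CommRing R] (P : SFD S)
    (hlf : ∀ F : Finset ℕ+, {ω : S | P.supp ω = F}.Finite)
    (c : S → R)
    (hmul : ∀ ω₁ ω₂ : S, P.supp ω₁ ∩ P.supp ω₂ = ∅ →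
      c (P.op ω₁ ω₂) = c ω₁ * c ω₂)
    (heqv : ∀ F₁ F₂ : Finset ℕ+, F₁.card = F₂.card →
      (∑ᶠ ω ∈ {w : S | P.IsAtom w ∧ P.supp w = F₁}, c ω)
        = ∑ᶠ ω ∈ {w : S | P.IsAtom w ∧ P.supp w = F₂}, c ω)
    (heps : c P.eps = 1) (n : ℕ) :
    (∑ᶠ ω ∈ {w : S | P.supp w = pInterval n}, c ω)
      = ∑ π ∈ partitionsOf n, ∏ p ∈ π,
          ∑ᶠ ω ∈ {w : S | P.IsAtom w ∧ P.supp w = pInterval p.card}, c ω := by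
  classical
  have hP : P.LocallyFinite := hlf
  rw [finsum_mem_eq_finite_toFinset_sum _ (hlf _), partitionsOf_eq_setPartitions]
  refine (hP.sum_slice_eq_sum_setPartitions hmul heps _).trans ?_
  refine sum_congr rfl fun π _ => prod_congr rfl fun p _ => ?_
  rw [heqv _ p (card_pInterval _), hP.finsum_atoms_eq_sum]

/-- equivariant partition formula. For a multiplicative
equivariant statistics with `c ε = 1` and `n ≥ 1`, the sum over the slice
`S_{[1..n]}` is the sum over set partitions `π` of `[1..n]` of the products
over blocks `p` of the atom-slice sums over `[1..card p]`. -/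
theorem slice_sum_equivariant_partition_formula {S : Type*} {R : Type*}
    [CommRing R] [Algebra ℚ R] (P : SFD S)
    (hlf : ∀ F : Finset ℕ+, {ω : S | P.supp ω = F}.Finite)
    (c : S → R)
    (hmul : ∀ ω₁ ω₂ : S, P.supp ω₁ ∩ P.supp ω₂ = ∅ →
      c (P.op ω₁ ω₂) = c ω₁ * c ω₂)
    (heqv : ∀ F₁ F₂ : Finset ℕ+, F₁.card = F₂.card →
      (∑ᶠ ω ∈ {w : S | P.IsAtom w ∧ P.supp w = F₁}, c ω)
        = ∑ᶠ ω ∈ {w : S | P.IsAtom w ∧ P.supp w = F₂}, c ω)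
    (heps : c P.eps = 1) (n : ℕ) (hn : 1 ≤ n) :
    (∑ᶠ ω ∈ {w : S | P.supp w = pInterval n}, c ω)
      = ∑ π ∈ partitionsOf n, ∏ p ∈ π,
          ∑ᶠ ω ∈ {w : S | P.IsAtom w ∧ P.supp w = pInterval p.card}, c ω :=
  slice_sum_equivariant_partition_formula_general P hlf c hmul heqv heps n
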